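/- arXiv:0908.2940 — 2 statements merged into one kernel-verified Lean document; each statement's English description precedes it below -/
import Mathlib

section
/- Let δ with 0 < δ ≤ 1 be a constant with the following (Razborov-type) property: for every positive integer n', every integer m' with n'/4 − δn' ≤ m' ≤ n'/4, and every rectangle R' = A' × B' over m'-element subsets of {1,…,n'} with μ_{0,n',m'}(R') ≥ 2^{−δn'}, one has μ_{1,n',m'}(R') ≥ (2/3)·μ_{0,n',m'}(R'). Set γ = δ/3. Then for every positive integer n divisible by 4, with m = n/4, every integer k with 0 ≤ k ≤ γ·n/2, and every rectangle R = A × B over m-element subsets of {1,…,n} with μ_{0,n,m}(R) ≥ 2^{−γn}, one has μ_{k,n,m}(R) ≥ μ_{0,n,m}(R)/2^{k} − k·2^{−δ(n−k+1)}. -/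
/-!
Deleting a common point `i` of `x` and `y` is a bijection between the pairs of
`(A ×ˢ B) ∩ T (n + 1) (m + 1) (k + 1)` whose intersection contains `i` and the pairs of
`T n m k` in the product of the links of `i` in `A` and `B`. Double counting over `i`, applied
both to `A ×ˢ B` and to the whole space, shows that `μ_{k+1}(A × B)` is the average over `i` of
`μ_k` of the product of the links.

Induct on `k`, applying the induction hypothesis to the links, which are families of
`(m - 1)`-subsets of `n - 1` points:
`μ_{k+1}(R) = avg_i μ_k(R_i) ≥ avg_i μ_0(R_i) / 2^k - k E = μ_1(R) / 2^k - k E`.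
The Razborov bound in the additive form `μ_1 ≥ μ_0 / 2 - 2^{-δn}` (trivial when
`μ_0 < 2^{-δn}`) finishes the step, since the error term `E` of the links dominates `2^{-δn}`.
Passing to links lowers `m - n/4` by `3/4`, so the invariant `n/4 - δn + 2k ≤ m` keeps every
rectangle that occurs within the range of the Razborov hypothesis.
-/

/-- `T n m k` : the set of pairs `(x, y)` of subsets of `{1,…,n}` (modeled as `Fin n`)
with `|x| = |y| = m` and `|x ∩ y| = k`. -/
def T (n m k : ℕ) : Finset (Finset (Fin n) × Finset (Fin n)) :=
  Finset.univ.filter (fun p => p.1.card = m ∧ p.2.card = m ∧ (p.1 ∩ p.2).card = k)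

/-- `mu n m k R = |R ∩ T_{k,n,m}| / |T_{k,n,m}|`. -/
noncomputable def mu (n m k : ℕ) (R : Finset (Finset (Fin n) × Finset (Fin n))) : ℝ :=
  ((R ∩ T n m k).card : ℝ) / ((T n m k).card : ℝ)

open Finset

section Link

variable {n : ℕ}

/-- The set `x ∪ {i}`, with `Fin n` embedded into `Fin (n + 1)` by skipping `i`. -/
def insertAt (i : Fin (n + 1)) (x : Finset (Fin n)) : Finset (Fin (n + 1)) :=
  insert i (x.map i.succAboveEmb)

noncomputable def deleteAt (i : Fin (n + 1)) (x : Finset (Fin (n + 1))) : Finset (Fin n) :=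
  x.preimage i.succAbove Fin.succAbove_right_injective.injOn

/-- The link of `i` in the family `A`: the sets `x \ {i}` for `i ∈ x ∈ A`, relabelled. -/
def link (i : Fin (n + 1)) (A : Finset (Finset (Fin (n + 1)))) : Finset (Finset (Fin n)) :=
  univ.filter (insertAt i · ∈ A)

@[simp]
lemma mem_link {i : Fin (n + 1)} {A : Finset (Finset (Fin (n + 1)))} {x : Finset (Fin n)} :
    x ∈ link i A ↔ insertAt i x ∈ A := by
  simp [link]

lemma mem_insertAt_self (i : Fin (n + 1)) (x : Finset (Fin n)) : i ∈ insertAt i x :=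
  mem_insert_self _ _

lemma card_insertAt (i : Fin (n + 1)) (x : Finset (Fin n)) : #(insertAt i x) = #x + 1 := by
  rw [insertAt, card_insert_of_notMem, card_map]
  simp [Fin.succAbove_ne]

lemma insertAt_inter (i : Fin (n + 1)) (x y : Finset (Fin n)) :
    insertAt i (x ∩ y) = insertAt i x ∩ insertAt i y := by
  rw [insertAt, insertAt, insertAt, map_inter, insert_inter_distrib]

lemma deleteAt_insertAt (i : Fin (n + 1)) (x : Finset (Fin n)) : deleteAt i (insertAt i x) = x := by
  ext j
  simp [deleteAt, insertAt, Fin.succAbove_ne]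

lemma insertAt_deleteAt {i : Fin (n + 1)} {x : Finset (Fin (n + 1))} (hi : i ∈ x) :
    insertAt i (deleteAt i x) = x := by
  ext j
  rcases eq_or_ne j i with rfl | hj
  · simp [mem_insertAt_self, hi]
  · obtain ⟨t, rfl⟩ := Fin.exists_succAbove_eq hj
    simp [deleteAt, insertAt, Fin.succAbove_ne]

lemma card_of_mem_link {i : Fin (n + 1)} {A : Finset (Finset (Fin (n + 1)))} {m : ℕ}
    (hA : ∀ x ∈ A, #x = m + 1) : ∀ x ∈ link i A, #x = m := by
  intro x hx
  have := hA _ (mem_link.mp hx)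
  rw [card_insertAt] at this
  omega

lemma link_powersetCard_univ (i : Fin (n + 1)) (m : ℕ) :
    link i (powersetCard (m + 1) univ) = powersetCard m univ := by
  ext x
  simp [card_insertAt]

end Link

section DoubleCounting

variable {n m k : ℕ}

@[simp]
lemma mem_T {p : Finset (Fin n) × Finset (Fin n)} :
    p ∈ T n m k ↔ #p.1 = m ∧ #p.2 = m ∧ #(p.1 ∩ p.2) = k := by
  simp [T]

lemma insertAt_mem_T_succ_iff (i : Fin (n + 1)) (x y : Finset (Fin n)) :
    (insertAt i x, insertAt i y) ∈ T (n + 1) (m + 1) (k + 1) ↔ (x, y) ∈ T n m k := by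
  simp [← insertAt_inter, card_insertAt]

lemma card_filter_mem_eq_card_link (i : Fin (n + 1)) (A B : Finset (Finset (Fin (n + 1)))) :
    #{p ∈ (A ×ˢ B) ∩ T (n + 1) (m + 1) (k + 1) | i ∈ p.1 ∧ i ∈ p.2}
      = #((link i A ×ˢ link i B) ∩ T n m k) := by
  refine card_nbij' (fun p => (deleteAt i p.1, deleteAt i p.2))
    (fun p => (insertAt i p.1, insertAt i p.2)) ?_ ?_ ?_ ?_
  · rintro ⟨x, y⟩ hp
    simp only [mem_coe, mem_filter, mem_inter, mem_product] at hp ⊢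
    obtain ⟨⟨⟨hx, hy⟩, hT⟩, hix, hiy⟩ := hp
    rw [← insertAt_deleteAt hix] at hx
    rw [← insertAt_deleteAt hiy] at hy
    rw [← insertAt_deleteAt hix, ← insertAt_deleteAt hiy, insertAt_mem_T_succ_iff] at hT
    exact ⟨⟨mem_link.mpr hx, mem_link.mpr hy⟩, hT⟩
  · rintro ⟨x, y⟩ hp
    simp only [mem_coe, mem_filter, mem_inter, mem_product, mem_link] at hp ⊢
    exact ⟨⟨hp.1, (insertAt_mem_T_succ_iff i x y).mpr hp.2⟩,
      mem_insertAt_self i x, mem_insertAt_self i y⟩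
  · rintro ⟨x, y⟩ hp
    simp only [mem_coe, mem_filter] at hp
    simp [insertAt_deleteAt hp.2.1, insertAt_deleteAt hp.2.2]
  · rintro ⟨x, y⟩ -
    simp [deleteAt_insertAt]

lemma succ_mul_card_product_inter_T_succ (A B : Finset (Finset (Fin (n + 1)))) :
    (k + 1) * #((A ×ˢ B) ∩ T (n + 1) (m + 1) (k + 1))
      = ∑ i, #((link i A ×ˢ link i B) ∩ T n m k) := by
  set S := (A ×ˢ B) ∩ T (n + 1) (m + 1) (k + 1)
  have hS : ∀ p ∈ S, #(univ.bipartiteAbove (fun p i => i ∈ p.1 ∧ i ∈ p.2) p) = k + 1 := by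
    intro p hp
    rw [← (mem_T.mp (mem_inter.mp hp).2).2.2]
    congr 1
    ext i
    simp [bipartiteAbove]
  have := sum_card_bipartiteAbove_eq_sum_card_bipartiteBelow (s := S) (t := univ)
    (r := fun p i => i ∈ p.1 ∧ i ∈ p.2)
  rw [sum_congr rfl hS, sum_const, smul_eq_mul] at this
  simp_rw [← card_filter_mem_eq_card_link]
  exact (mul_comm _ _).trans this

lemma powersetCard_product_inter_T :
    (powersetCard m univ ×ˢ powersetCard m univ) ∩ T n m k = T n m k :=
  inter_eq_right.mpr fun p hp => by simp_all

lemma succ_mul_card_T_succ : (k + 1) * #(T (n + 1) (m + 1) (k + 1)) = (n + 1) * #(T n m k) := by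
  simpa [powersetCard_product_inter_T, link_powersetCard_univ] using
    succ_mul_card_product_inter_T_succ (n := n) (m := m) (k := k) (powersetCard (m + 1) univ)
      (powersetCard (m + 1) univ)

end DoubleCounting

lemma mu_nonneg (n m k : ℕ) (R : Finset (Finset (Fin n) × Finset (Fin n))) :
    0 ≤ mu n m k R := by
  unfold mu
  positivity

/-- When `T n m k` is empty so is `T (n + 1) (m + 1) (k + 1)`, and both sides are `0`
by `x / 0 = 0`. -/
lemma mu_succ_eq_average {n m k : ℕ} (A B : Finset (Finset (Fin (n + 1)))) :
    mu (n + 1) (m + 1) (k + 1) (A ×ˢ B)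
      = (∑ i, mu n m k (link i A ×ˢ link i B)) / (n + 1) := by
  have hR : ((k : ℝ) + 1) * #((A ×ˢ B) ∩ T (n + 1) (m + 1) (k + 1))
      = ∑ i, (#((link i A ×ˢ link i B) ∩ T n m k) : ℝ) := by
    exact_mod_cast succ_mul_card_product_inter_T_succ A B
  have hT : ((k : ℝ) + 1) * #(T (n + 1) (m + 1) (k + 1)) = #(T n m k) * (n + 1) := by
    rw [mul_comm _ (n + 1 : ℝ)]
    exact_mod_cast succ_mul_card_T_succ
  unfold mu
  rw [← mul_div_mul_left _ _ (by positivity : (k : ℝ) + 1 ≠ 0), hR, hT, ← sum_div, div_div]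

def RazborovProperty (δ : ℝ) : Prop :=
  ∀ (n' m' : ℕ), 0 < n' →
    (n' : ℝ) / 4 - δ * n' ≤ (m' : ℝ) → (m' : ℝ) ≤ (n' : ℝ) / 4 →
    ∀ A' B' : Finset (Finset (Fin n')),
      (∀ x ∈ A', x.card = m') → (∀ y ∈ B', y.card = m') →
      mu n' m' 0 (A' ×ˢ B') ≥ (2 : ℝ) ^ (-(δ * n')) →
      mu n' m' 1 (A' ×ˢ B') ≥ (2 / 3) * mu n' m' 0 (A' ×ˢ B')

section Sampling

variable {δ : ℝ}

lemma RazborovProperty.mu_one_ge (hRaz : RazborovProperty δ) {n m : ℕ} (hn : 0 < n)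
    (hlo : (n : ℝ) / 4 - δ * n ≤ m) (hhi : (m : ℝ) ≤ n / 4) {A B : Finset (Finset (Fin n))}
    (hA : ∀ x ∈ A, #x = m) (hB : ∀ y ∈ B, #y = m) :
    mu n m 0 (A ×ˢ B) / 2 - (2 : ℝ) ^ (-(δ * n)) ≤ mu n m 1 (A ×ˢ B) := by
  have h0 := mu_nonneg n m 0 (A ×ˢ B)
  by_cases hlarge : (2 : ℝ) ^ (-(δ * n)) ≤ mu n m 0 (A ×ˢ B)
  · have h1 : 2 / 3 * mu n m 0 (A ×ˢ B) ≤ mu n m 1 (A ×ˢ B) :=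
      hRaz n m hn hlo hhi A B hA hB hlarge
    linarith [Real.rpow_nonneg zero_le_two (-(δ * n))]
  · linarith [mu_nonneg n m 1 (A ×ˢ B)]

lemma mu_succ_ge_of_links {n m k : ℕ} (A B : Finset (Finset (Fin (n + 1)))) {D E : ℝ}
    (hD : 0 ≤ D) (hDE : D ≤ E)
    (hone : mu (n + 1) (m + 1) 0 (A ×ˢ B) / 2 - D ≤ mu (n + 1) (m + 1) 1 (A ×ˢ B))
    (hlinks : ∀ i, mu n m 0 (link i A ×ˢ link i B) / 2 ^ k - k * E
      ≤ mu n m k (link i A ×ˢ link i B)) :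
    mu (n + 1) (m + 1) 0 (A ×ˢ B) / 2 ^ (k + 1) - (k + 1) * E
      ≤ mu (n + 1) (m + 1) (k + 1) (A ×ˢ B) := by
  have hDk : D / 2 ^ k ≤ E := (div_le_self hD (one_le_pow₀ one_le_two)).trans hDE
  have hone' := mu_succ_eq_average (n := n) (m := m) (k := 0) A B
  rw [zero_add] at hone'
  calc mu (n + 1) (m + 1) 0 (A ×ˢ B) / 2 ^ (k + 1) - (k + 1) * E
      ≤ (mu (n + 1) (m + 1) 0 (A ×ˢ B) / 2 - D) / 2 ^ k - k * E := by
        rw [pow_succ, sub_div, div_div, mul_comm (2 : ℝ)]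
        linarith
    _ ≤ mu (n + 1) (m + 1) 1 (A ×ˢ B) / 2 ^ k - k * E := by gcongr
    _ = (∑ i, (mu n m 0 (link i A ×ˢ link i B) / 2 ^ k - k * E)) / (n + 1) := by
        rw [hone', sum_sub_distrib, ← sum_div, sum_const, card_univ, Fintype.card_fin,
          nsmul_eq_mul]
        field_simp
        push_cast
        ring
    _ ≤ (∑ i, mu n m k (link i A ×ˢ link i B)) / (n + 1) := by
        gcongr with i
        exact hlinks i
    _ = mu (n + 1) (m + 1) (k + 1) (A ×ˢ B) := (mu_succ_eq_average A B).symm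

theorem RazborovProperty.intersection_sampling (hRaz : RazborovProperty δ) (hδ0 : 0 ≤ δ)
    (hδ1 : δ ≤ 1) (k : ℕ) {n m : ℕ} {A B : Finset (Finset (Fin n))}
    (hA : ∀ x ∈ A, #x = m) (hB : ∀ y ∈ B, #y = m) (hkm : k ≤ m) (hm : (m : ℝ) ≤ n / 4)
    (hlo : (n : ℝ) / 4 - δ * n + 2 * k ≤ m) :
    mu n m 0 (A ×ˢ B) / 2 ^ k - k * (2 : ℝ) ^ (-(δ * ((n : ℝ) - k + 1)))
      ≤ mu n m k (A ×ˢ B) := by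
  induction k generalizing n m with
  | zero => simp
  | succ k ih =>
    obtain ⟨m, rfl⟩ : ∃ m', m = m' + 1 := ⟨m - 1, by omega⟩
    have h4m : 4 * (m + 1) ≤ n := by
      have : (4 * (m + 1 : ℕ) : ℝ) ≤ n := by linarith
      exact_mod_cast this
    obtain ⟨n, rfl⟩ : ∃ n', n = n' + 1 := ⟨n - 1, by omega⟩
    push_cast at hm hlo ⊢
    rw [show δ * ((n : ℝ) + 1 - (k + 1) + 1) = δ * (n - k + 1) by ring]
    refine mu_succ_ge_of_links A B (D := (2 : ℝ) ^ (-(δ * (n + 1)))) (by positivity) ?_ ?_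
      fun i => ih (card_of_mem_link hA) (card_of_mem_link hB) (by omega) (by linarith)
        (by linarith)
    · exact Real.rpow_le_rpow_of_exponent_le one_le_two (by nlinarith)
    · simpa using hRaz.mu_one_ge (n := n + 1) (m := m + 1) (by omega) (by push_cast; linarith)
        (by push_cast; linarith) hA hB

end Sampling

/-- Inductive form of the Intersection Sampling Lemma, assuming a Razborov-type lemma
with constant `δ`, and taking `γ = δ/3`. -/
theorem intersection_sampling_inductive (δ : ℝ) (hδ0 : 0 < δ) (hδ1 : δ ≤ 1)
    (hRaz : ∀ (n' m' : ℕ), 0 < n' →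
      (n' : ℝ) / 4 - δ * n' ≤ (m' : ℝ) → (m' : ℝ) ≤ (n' : ℝ) / 4 →
      ∀ A' B' : Finset (Finset (Fin n')),
        (∀ x ∈ A', x.card = m') → (∀ y ∈ B', y.card = m') →
        mu n' m' 0 (A' ×ˢ B') ≥ (2 : ℝ) ^ (-(δ * n')) →
        mu n' m' 1 (A' ×ˢ B') ≥ (2 / 3) * mu n' m' 0 (A' ×ˢ B')) :
    ∀ (n k : ℕ), 0 < n → 4 ∣ n → (k : ℝ) ≤ (δ / 3) * n / 2 →
      ∀ A B : Finset (Finset (Fin n)),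
        (∀ x ∈ A, x.card = n / 4) → (∀ y ∈ B, y.card = n / 4) →
        mu n (n / 4) 0 (A ×ˢ B) ≥ (2 : ℝ) ^ (-((δ / 3) * n)) →
        mu n (n / 4) k (A ×ˢ B) ≥
          mu n (n / 4) 0 (A ×ˢ B) / 2 ^ k - k * (2 : ℝ) ^ (-(δ * ((n : ℝ) - k + 1))) := by
  intro n k _ hdvd hk A B hA hB _
  have hm : ((n / 4 : ℕ) : ℝ) = n / 4 := by
    rw [Nat.cast_div hdvd (by norm_num)]
    norm_num
  have hδn : 0 ≤ δ * n := by positivity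
  have hδn' : δ * n ≤ n := by nlinarith
  have hkm : k ≤ n / 4 := by
    have : (k : ℝ) ≤ ((n / 4 : ℕ) : ℝ) := by linarith
    exact_mod_cast this
  exact RazborovProperty.intersection_sampling hRaz hδ0.le hδ1 k hA hB hkm hm.le (by linarith)
end

section
/- For all positive integers n, k and every integer K with 1 ≤ K ≤ k, the product ∏_{i=0}^{K−1} (k·n − i·n)/(k·n − i) is at least (1 − K/k)^K (as real numbers). -/
/-! Each factor equals `n (k - i) / (k n - i)`, and shrinking the denominator `k n - i` to
`k n` leaves `(k - i) / k ≥ 1 - K / k`. -/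

lemma sub_div_le_mul_sub_mul_div_mul_sub {k i n : ℝ} (hi : 0 ≤ i) (hik : i < k) (hn : 1 ≤ n) :
    (k - i) / k ≤ (k * n - i * n) / (k * n - i) := by
  have hk : 0 < k := hi.trans_lt hik
  have hden : 0 < k * n - i := by nlinarith
  calc (k - i) / k = (k - i) * n / (k * n) := by field_simp
    _ ≤ (k - i) * n / (k * n - i) :=
        div_le_div_of_nonneg_left (by nlinarith) hden (by linarith)
    _ = (k * n - i * n) / (k * n - i) := by ring

theorem product_lower_bound_general (n k K : ℕ) (hn : 1 ≤ n) (hKk : K ≤ k) :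
    ∏ i ∈ Finset.range K,
        (((k : ℝ) * n - (i : ℝ) * n) / ((k : ℝ) * n - (i : ℝ))) ≥
      (1 - (K : ℝ) / k) ^ K := by
  have hKk' : (K : ℝ) ≤ k := by exact_mod_cast hKk
  rw [ge_iff_le, show (1 - (K : ℝ) / k) ^ K = ∏ _i ∈ Finset.range K, (1 - (K : ℝ) / k) by simp]
  refine Finset.prod_le_prod (fun _ _ => ?_) fun i hi => ?_
  · exact sub_nonneg.2 (div_le_one_of_le₀ hKk' (Nat.cast_nonneg k))
  · have hiK : (i : ℝ) < K := by exact_mod_cast Finset.mem_range.1 hi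
    have hk : (0 : ℝ) < k := (Nat.cast_nonneg i).trans_lt (hiK.trans_le hKk')
    calc 1 - (K : ℝ) / k = (k - K) / k := by field_simp
      _ ≤ (k - i) / k := by gcongr
      _ ≤ _ := sub_div_le_mul_sub_mul_div_mul_sub (Nat.cast_nonneg i)
              (hiK.trans_le hKk') (by exact_mod_cast hn)

/-- `∏_{i=0}^{K−1} (k·n − i·n)/(k·n − i) ≥ (1 − K/k)^K` for `1 ≤ K ≤ k` and `n ≥ 1`. -/
theorem product_lower_bound (n k K : ℕ) (hn : 1 ≤ n) (hK : 1 ≤ K) (hKk : K ≤ k) :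
    ∏ i ∈ Finset.range K,
        (((k : ℝ) * n - (i : ℝ) * n) / ((k : ℝ) * n - (i : ℝ))) ≥
      (1 - (K : ℝ) / k) ^ K :=
  product_lower_bound_general n k K hn hKk
end
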